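/- Let 0 < x̄₁, x̄₂ satisfy x̄₁ = g(x̄₂)f(x̄₁) and x̄₂ = ((g(x̄₁)+g(x̄₂))/2)·f(x̄₂) (a stationary state of the three-cell problem with two equal coordinates). Suppose γ is differentiable at x̄₂ with γ(x̄₂) = x̄₁ and γ(y)/f(γ(y)) = g(y) for all y in a neighbourhood of x̄₂, and Γ is differentiable at x̄₁ with Γ(x̄₁) = x̄₂ and Γ(x)/f(Γ(x)) − g(Γ(x))/2 = g(x)/2 for all x in a neighbourhood of x̄₁. Then, writing f₁ = f(x̄₁), f₂ = f(x̄₂), f′₁ = f′(x̄₁), f′₂ = f′(x̄₂), g₁ = g(x̄₁), g₂ = g(x̄₂), g′₁ = g′(x̄₁), g′₂ = g′(x̄₂), the derivative of γ∘Γ at x̄₁ equals [g′₁f₂ / (2 − (f′₂g₂ + f₂g′₂) − g₁f′₂)] · [f₁g′₂ / (1 − f′₁g₂)]. In particular, the boundary for existence of non-homogeneous stationary solutions, where γ∘Γ has a double fixed point, is given by this product equalling 1. -/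

import Mathlib

/-- The Hill-type function `f(x) = 1/(a + x^k)` of the reduced Hes1–Notch model. -/
noncomputable def fHill (a : ℝ) (k : ℕ) : ℝ → ℝ := fun x => 1 / (a + x ^ k)

/-- The Hill-type function `g(x) = 1/(1 + b·x^h)` of the reduced Hes1–Notch model. -/
noncomputable def gHill (b : ℝ) (h : ℕ) : ℝ → ℝ := fun x => 1 / (1 + b * x ^ h)

/-!
Both response maps are given implicitly by `φ ∘ γ = g` and `ψ ∘ Γ = g / 2` with
`φ x = x / f x` and `ψ x = x / f x - g x / 2`, so implicit differentiation yields
`γ'(x̄₂)` and `Γ'(x̄₁)`. The stationary relations turn the denominators `φ'(x̄₁)` and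
`2 ψ'(x̄₂)` into the denominators of the claimed formula, and for the Hill functions these are
positive because `f` and `g` are positive and decreasing on `[0, ∞)`.
-/

open Filter Topology

theorem HasDerivAt.mul_eq_of_comp_eventuallyEq {φ γ G : ℝ → ℝ} {φ' γ' G' y : ℝ}
    (hφ : HasDerivAt φ φ' (γ y)) (hγ : HasDerivAt γ γ' y) (hG : HasDerivAt G G' y)
    (h : ∀ᶠ z in 𝓝 y, φ (γ z) = G z) : φ' * γ' = G' :=
  (hφ.comp y hγ).unique (hG.congr_of_eventuallyEq h)

section ImplicitResponse

variable {f g : ℝ → ℝ} {x1 x2 : ℝ}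

theorem hasDerivAt_id_div (hf : DifferentiableAt ℝ f x1) (hf1 : f x1 ≠ 0) :
    HasDerivAt (fun x => x / f x) ((f x1 - x1 * deriv f x1) / f x1 ^ 2) x1 := by
  simpa only [one_mul] using (hasDerivAt_id' x1).fun_div hf.hasDerivAt hf1

theorem deriv_eq_of_div_comp_eventuallyEq {γ : ℝ → ℝ}
    (hf : DifferentiableAt ℝ f x1) (hg : DifferentiableAt ℝ g x2)
    (hγ : DifferentiableAt ℝ γ x2) (hγx2 : γ x2 = x1) (hf1 : f x1 ≠ 0)
    (hrel : x1 = g x2 * f x1) (hden : 1 - deriv f x1 * g x2 ≠ 0)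
    (himp : ∀ᶠ y in 𝓝 x2, γ y / f (γ y) = g y) :
    deriv γ x2 = f x1 * deriv g x2 / (1 - deriv f x1 * g x2) := by
  have hφ : HasDerivAt (fun x => x / f x) ((f x1 - x1 * deriv f x1) / f x1 ^ 2) (γ x2) := by
    rw [hγx2]; exact hasDerivAt_id_div hf hf1
  have key := HasDerivAt.mul_eq_of_comp_eventuallyEq hφ hγ.hasDerivAt hg.hasDerivAt himp
  field_simp at key
  rw [eq_div_iff hden]
  refine mul_left_cancel₀ hf1 ?_
  linear_combination key + deriv γ x2 * deriv f x1 * hrel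

theorem deriv_eq_of_div_sub_comp_eventuallyEq {Γ : ℝ → ℝ}
    (hf : DifferentiableAt ℝ f x2) (hg1 : DifferentiableAt ℝ g x1)
    (hg2 : DifferentiableAt ℝ g x2) (hΓ : DifferentiableAt ℝ Γ x1) (hΓx1 : Γ x1 = x2)
    (hf2 : f x2 ≠ 0) (hrel : x2 = (g x1 + g x2) / 2 * f x2)
    (hden : 2 - (deriv f x2 * g x2 + f x2 * deriv g x2) - g x1 * deriv f x2 ≠ 0)
    (himp : ∀ᶠ x in 𝓝 x1, Γ x / f (Γ x) - g (Γ x) / 2 = g x / 2) :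
    deriv Γ x1 = deriv g x1 * f x2 /
      (2 - (deriv f x2 * g x2 + f x2 * deriv g x2) - g x1 * deriv f x2) := by
  have hψ : HasDerivAt (fun x => x / f x - g x / 2)
      ((f x2 - x2 * deriv f x2) / f x2 ^ 2 - deriv g x2 / 2) (Γ x1) := by
    rw [hΓx1]; exact (hasDerivAt_id_div hf hf2).sub (hg2.hasDerivAt.div_const 2)
  have key := HasDerivAt.mul_eq_of_comp_eventuallyEq hψ hΓ.hasDerivAt
    (hg1.hasDerivAt.div_const 2) himp
  field_simp at key
  rw [eq_div_iff hden]
  refine mul_left_cancel₀ hf2 ?_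
  linear_combination key + 2 * deriv Γ x1 * deriv f x2 * hrel

end ImplicitResponse

section Hill

variable {a b : ℝ} {k h : ℕ} {x : ℝ}

theorem hasDerivAt_fHill (hx : a + x ^ k ≠ 0) :
    HasDerivAt (fHill a k) (-(k * x ^ (k - 1)) / (a + x ^ k) ^ 2) x := by
  unfold fHill
  simpa only [one_div] using ((hasDerivAt_pow k x).const_add a).fun_inv hx

theorem hasDerivAt_gHill (hx : 1 + b * x ^ h ≠ 0) :
    HasDerivAt (gHill b h) (-(b * (h * x ^ (h - 1))) / (1 + b * x ^ h) ^ 2) x := by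
  unfold gHill
  simpa only [one_div] using (((hasDerivAt_pow h x).const_mul b).const_add 1).fun_inv hx

theorem fHill_pos (ha : 0 < a) (hx : 0 ≤ x) : 0 < fHill a k x := by
  unfold fHill; positivity

theorem gHill_pos (hb : 0 ≤ b) (hx : 0 ≤ x) : 0 < gHill b h x := by
  unfold gHill; positivity

theorem differentiableAt_fHill (ha : 0 < a) (hx : 0 ≤ x) : DifferentiableAt ℝ (fHill a k) x :=
  (hasDerivAt_fHill (by positivity)).differentiableAt

theorem differentiableAt_gHill (hb : 0 ≤ b) (hx : 0 ≤ x) : DifferentiableAt ℝ (gHill b h) x :=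
  (hasDerivAt_gHill (by positivity)).differentiableAt

theorem deriv_fHill_nonpos (ha : 0 < a) (hx : 0 ≤ x) : deriv (fHill a k) x ≤ 0 := by
  rw [(hasDerivAt_fHill (by positivity)).deriv]
  exact div_nonpos_of_nonpos_of_nonneg (neg_nonpos.2 (by positivity)) (sq_nonneg _)

theorem deriv_gHill_nonpos (hb : 0 ≤ b) (hx : 0 ≤ x) : deriv (gHill b h) x ≤ 0 := by
  rw [(hasDerivAt_gHill (by positivity)).deriv]
  exact div_nonpos_of_nonpos_of_nonneg (neg_nonpos.2 (by positivity)) (sq_nonneg _)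

end Hill

theorem threeCell_gamma_comp_deriv_general
    (a b : ℝ) (ha : 0 < a) (hb : 0 < b) (k h : ℕ)
    (x1 x2 : ℝ) (hx1 : 0 < x1) (hx2 : 0 < x2)
    (hrel1 : x1 = gHill b h x2 * fHill a k x1)
    (hrel2 : x2 = (gHill b h x1 + gHill b h x2) / 2 * fHill a k x2)
    (γ Γ : ℝ → ℝ)
    (hγdiff : DifferentiableAt ℝ γ x2) (hγval : γ x2 = x1)
    (hγ : ∀ᶠ y in nhds x2, γ y / fHill a k (γ y) = gHill b h y)
    (hΓdiff : DifferentiableAt ℝ Γ x1) (hΓval : Γ x1 = x2)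
    (hΓ : ∀ᶠ x in nhds x1, Γ x / fHill a k (Γ x) - gHill b h (Γ x) / 2 = gHill b h x / 2) :
    deriv (γ ∘ Γ) x1 =
      deriv (gHill b h) x1 * fHill a k x2 /
          (2 - (deriv (fHill a k) x2 * gHill b h x2 + fHill a k x2 * deriv (gHill b h) x2)
            - gHill b h x1 * deriv (fHill a k) x2) *
        (fHill a k x1 * deriv (gHill b h) x2 / (1 - deriv (fHill a k) x1 * gHill b h x2)) := by
  have f1_pos := fHill_pos (k := k) ha hx1.le
  have f2_pos := fHill_pos (k := k) ha hx2.le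
  have g1_pos := gHill_pos (h := h) hb.le hx1.le
  have g2_pos := gHill_pos (h := h) hb.le hx2.le
  have f1'_nonpos := deriv_fHill_nonpos (k := k) ha hx1.le
  have f2'_nonpos := deriv_fHill_nonpos (k := k) ha hx2.le
  have g2'_nonpos := deriv_gHill_nonpos (h := h) hb.le hx2.le
  have hden1 : 0 < 1 - deriv (fHill a k) x1 * gHill b h x2 := by nlinarith
  have hden2 : 0 < 2 - (deriv (fHill a k) x2 * gHill b h x2 + fHill a k x2 * deriv (gHill b h) x2)
      - gHill b h x1 * deriv (fHill a k) x2 := by nlinarith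
  have hγ' := deriv_eq_of_div_comp_eventuallyEq (differentiableAt_fHill ha hx1.le)
    (differentiableAt_gHill hb.le hx2.le) hγdiff hγval f1_pos.ne' hrel1 hden1.ne' hγ
  have hΓ' := deriv_eq_of_div_sub_comp_eventuallyEq (differentiableAt_fHill ha hx2.le)
    (differentiableAt_gHill hb.le hx1.le) (differentiableAt_gHill hb.le hx2.le) hΓdiff hΓval
    f2_pos.ne' hrel2 hden2.ne' hΓ
  rw [deriv_comp x1 (hΓval ▸ hγdiff) hΓdiff, hΓval, hγ', hΓ', mul_comm]

/-- At a stationary state `(x̄₁, x̄₂)` of the three-cell problem (with two equal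
coordinates), with `γ` and `Γ` the implicit stationary-response maps determined by
`γ(y)/f(γ(y)) = g(y)` and `Γ(x)/f(Γ(x)) − g(Γ(x))/2 = g(x)/2`, the derivative of `γ∘Γ`
at `x̄₁` equals `[g′₁f₂/(2 − (f′₂g₂ + f₂g′₂) − g₁f′₂)]·[f₁g′₂/(1 − f′₁g₂)]`; the boundary
for existence of non-homogeneous stationary solutions (a double fixed point of `γ∘Γ`) is
given by this product equalling `1`. -/
theorem threeCell_gamma_comp_deriv
    (a b : ℝ) (ha : 0 < a) (hb : 0 < b) (k h : ℕ) (hk : 1 ≤ k) (hh : 1 ≤ h)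
    (x1 x2 : ℝ) (hx1 : 0 < x1) (hx2 : 0 < x2)
    (hrel1 : x1 = gHill b h x2 * fHill a k x1)
    (hrel2 : x2 = (gHill b h x1 + gHill b h x2) / 2 * fHill a k x2)
    (γ Γ : ℝ → ℝ)
    (hγdiff : DifferentiableAt ℝ γ x2) (hγval : γ x2 = x1)
    (hγ : ∀ᶠ y in nhds x2, γ y / fHill a k (γ y) = gHill b h y)
    (hΓdiff : DifferentiableAt ℝ Γ x1) (hΓval : Γ x1 = x2)
    (hΓ : ∀ᶠ x in nhds x1, Γ x / fHill a k (Γ x) - gHill b h (Γ x) / 2 = gHill b h x / 2) :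
    deriv (γ ∘ Γ) x1 =
      deriv (gHill b h) x1 * fHill a k x2 /
          (2 - (deriv (fHill a k) x2 * gHill b h x2 + fHill a k x2 * deriv (gHill b h) x2)
            - gHill b h x1 * deriv (fHill a k) x2) *
        (fHill a k x1 * deriv (gHill b h) x2 / (1 - deriv (fHill a k) x1 * gHill b h x2)) :=
  threeCell_gamma_comp_deriv_general a b ha hb k h x1 x2 hx1 hx2 hrel1 hrel2 γ Γ hγdiff hγval hγ
    hΓdiff hΓval hΓ
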